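/- For any associative unital k-algebra R and n ≥ 1, the trace map Mat_n(R) → R/[R,R] sending a matrix to the class of the sum of its diagonal entries induces a k-module isomorphism Mat_n(R)/[Mat_n(R),Mat_n(R)] ≅ R/[R,R] (Morita invariance of HH_0). -/

import Mathlib

open Matrix

/-- The k-submodule of an algebra spanned by all commutators `a*b - b*a`. -/
def commutatorSubmodule (k A : Type*) [CommRing k] [Ring A] [Algebra k A] :
    Submodule k A :=
  Submodule.span k {x : A | ∃ a b : A, x = a * b - b * a}

lemma comm_mem {k A : Type*} [CommRing k] [Ring A] [Algebra k A] (a b : A) :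
    a * b - b * a ∈ commutatorSubmodule k A :=
  Submodule.subset_span ⟨a, b, rfl⟩

section
variable {k R : Type*} [CommRing k] [Ring R] [Algebra k R] {n : ℕ}

/-- `single i j` as a linear map in the entry. -/
def stdLin (i j : Fin n) : R →ₗ[k] Matrix (Fin n) (Fin n) R where
  toFun r := single i j r
  map_add' a b := (single_add i j a b)
  map_smul' c a := by
    ext x y
    simp [single, smul_ite]

@[simp] lemma stdLin_apply (i j : Fin n) (r : R) :
    stdLin (k := k) i j r = single i j r := rfl

lemma trace_comm_mem (A B : Matrix (Fin n) (Fin n) R) :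
    Matrix.trace (A * B) - Matrix.trace (B * A) ∈ commutatorSubmodule k R := by
  have h1 : Matrix.trace (A * B) = ∑ i, ∑ j, A i j * B j i := by
    simp [Matrix.trace, Matrix.diag, Matrix.mul_apply]
  have h2 : Matrix.trace (B * A) = ∑ i, ∑ j, B j i * A i j := by
    rw [Matrix.trace]
    simp only [Matrix.diag, Matrix.mul_apply]
    rw [Finset.sum_comm]
  rw [h1, h2, ← Finset.sum_sub_distrib]
  refine Submodule.sum_mem _ fun i _ => ?_
  rw [← Finset.sum_sub_distrib]
  exact Submodule.sum_mem _ fun j _ => comm_mem _ _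

lemma std_sub_mem (i j : Fin n) (a : R) [NeZero n] :
    single i j a - (if i = j then single 0 0 a else 0) ∈
      commutatorSubmodule k (Matrix (Fin n) (Fin n) R) := by
  by_cases h : i = j
  · subst h
    rw [if_pos rfl]
    have heq : single i i a - single (0 : Fin n) (0 : Fin n) a =
        single i 0 a * single 0 i 1 -
          single 0 i 1 * single i 0 a := by
      rw [single_mul_single_same, single_mul_single_same, mul_one, one_mul]
    rw [heq]; exact comm_mem _ _
  · rw [if_neg h, sub_zero]
    have heq : single i j a =
        single i j a * single j j 1 -
          single j j 1 * single i j a := by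
      rw [single_mul_single_same, mul_one,
        single_mul_single_of_ne (h := Ne.symm h), sub_zero]
    rw [heq]; exact comm_mem _ _

lemma matrix_sub_trace_mem (M : Matrix (Fin n) (Fin n) R) [NeZero n] :
    M - single 0 0 (Matrix.trace M) ∈
      commutatorSubmodule k (Matrix (Fin n) (Fin n) R) := by
  have hM := matrix_eq_sum_single M
  have htr : single (0 : Fin n) (0 : Fin n) (Matrix.trace M) =
      ∑ i : Fin n, ∑ j : Fin n, (if i = j then single (0 : Fin n) (0 : Fin n) (M i i) else 0) := by
    simp only [Finset.sum_ite_eq, Finset.mem_univ, if_true]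
    rw [show Matrix.trace M = ∑ i, M i i from rfl]
    ext a b
    simp only [single, of_apply, Matrix.sum_apply]
    by_cases hab : (0 : Fin n) = a ∧ (0 : Fin n) = b <;> simp [hab]
  rw [htr]
  nth_rewrite 1 [hM]
  rw [← Finset.sum_sub_distrib]
  refine Submodule.sum_mem _ fun i _ => ?_
  rw [← Finset.sum_sub_distrib]
  refine Submodule.sum_mem _ fun j _ => ?_
  have := std_sub_mem (k := k) i j (M i j)
  by_cases h : i = j
  · subst h; simpa using this
  · simpa [h] using this

end

/-- (Morita invariance of `HH_0`.)  For any associative unital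
`k`-algebra `R` and `n ≥ 1`, the trace map `Mat_n(R) → R/[R,R]` sending a matrix to the
class of the sum of its diagonal entries induces a `k`-module isomorphism
`Mat_n(R)/[Mat_n(R),Mat_n(R)] ≅ R/[R,R]`. -/
theorem hh0_morita_invariance (k R : Type*) [CommRing k] [Ring R] [Algebra k R]
    (n : ℕ) (hn : 1 ≤ n) :
    ∃ E : (Matrix (Fin n) (Fin n) R ⧸
            commutatorSubmodule k (Matrix (Fin n) (Fin n) R)) ≃ₗ[k]
          (R ⧸ commutatorSubmodule k R),
      ∀ M : Matrix (Fin n) (Fin n) R,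
        E (Submodule.Quotient.mk M) = Submodule.Quotient.mk (∑ i, M i i) := by
  haveI : NeZero n := ⟨by omega⟩
  set cM := commutatorSubmodule k (Matrix (Fin n) (Fin n) R)
  set cR := commutatorSubmodule k R
  -- forward map
  have hT : cM ≤ LinearMap.ker (cR.mkQ.comp (Matrix.traceLinearMap (Fin n) k R)) := by
    refine Submodule.span_le.mpr ?_
    rintro x ⟨A, B, rfl⟩
    simp only [SetLike.mem_coe, LinearMap.mem_ker, LinearMap.comp_apply,
      Matrix.traceLinearMap_apply, map_sub, Submodule.mkQ_apply]
    rw [← Submodule.mkQ_apply, ← Submodule.mkQ_apply, ← map_sub,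
      Submodule.mkQ_apply, Submodule.Quotient.mk_eq_zero]
    exact trace_comm_mem A B
  set f : (Matrix (Fin n) (Fin n) R ⧸ cM) →ₗ[k] (R ⧸ cR) :=
    cM.liftQ (cR.mkQ.comp (Matrix.traceLinearMap (Fin n) k R)) hT with hf
  -- backward map
  have hS : cR ≤ LinearMap.ker (cM.mkQ.comp (stdLin (k := k) (0 : Fin n) 0)) := by
    refine Submodule.span_le.mpr ?_
    rintro x ⟨a, b, rfl⟩
    simp only [SetLike.mem_coe, LinearMap.mem_ker, LinearMap.comp_apply, map_sub,
      Submodule.mkQ_apply]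
    rw [← Submodule.mkQ_apply, ← Submodule.mkQ_apply, ← map_sub,
      Submodule.mkQ_apply, Submodule.Quotient.mk_eq_zero]
    have : (stdLin (k := k) (0 : Fin n) 0) (a * b) - (stdLin (k := k) (0 : Fin n) 0) (b * a) =
        single 0 0 a * single 0 0 b -
          single 0 0 b * single 0 0 a := by
      show single (0:Fin n) 0 (a*b) - single (0:Fin n) 0 (b*a) = _
      rw [single_mul_single_same, single_mul_single_same]
    rw [this]
    exact comm_mem _ _
  set g : (R ⧸ cR) →ₗ[k] (Matrix (Fin n) (Fin n) R ⧸ cM) :=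
    cR.liftQ (cM.mkQ.comp (stdLin (k := k) (0 : Fin n) 0)) hS with hg
  have hfg : f.comp g = LinearMap.id := by
    apply Submodule.linearMap_qext
    ext r
    simp only [LinearMap.comp_apply, Submodule.mkQ_apply, LinearMap.id_apply, hf, hg,
      Submodule.liftQ_apply, Matrix.traceLinearMap_apply]
    show Submodule.Quotient.mk (Matrix.trace (single (0:Fin n) 0 r)) =
      Submodule.Quotient.mk r
    congr 1
    simp [Matrix.trace, Matrix.diag, single, Finset.sum_ite_eq]
  have hgf : g.comp f = LinearMap.id := by
    apply Submodule.linearMap_qext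
    ext M
    simp only [LinearMap.comp_apply, Submodule.mkQ_apply, LinearMap.id_apply, hf, hg,
      Submodule.liftQ_apply, Matrix.traceLinearMap_apply]
    show Submodule.Quotient.mk (single (0:Fin n) 0 (Matrix.trace M)) =
      Submodule.Quotient.mk M
    rw [Submodule.Quotient.eq]
    have := matrix_sub_trace_mem (k := k) M
    rw [show single (0:Fin n) 0 (Matrix.trace M) - M =
      -(M - single 0 0 (Matrix.trace M)) from (neg_sub _ _).symm]
    exact Submodule.neg_mem _ this
  refine ⟨LinearEquiv.ofLinear f g hfg hgf, fun M => ?_⟩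
  show f (Submodule.Quotient.mk M) = _
  rw [hf]
  simp only [Submodule.liftQ_apply, LinearMap.comp_apply, Matrix.traceLinearMap_apply,
    Submodule.mkQ_apply]
  rfl
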